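/- arXiv:1212.3227 — 2 statements merged into one kernel-verified Lean document; each statement's English description precedes it below -/
import Mathlib

section
/- Let φ ∈ L¹(ℝ^d) with ‖|x| φ‖_{L¹} < ∞, let f : ℝ^d → ℝ be Lipschitz with Lipschitz constant L, and let g ∈ L^{q}. Then ‖φ ∗ (f g) − f · (φ ∗ g)‖_{L^q} ≤ L · ‖ |x| φ(x) ‖_{L¹} · ‖g‖_{L^{q}}. -/
open MeasureTheory ENNReal NNReal

section Aux

variable {α : Type*} [MeasurableSpace α] {μ : Measure α}

/-- An `ℝ≥0∞`-valued `L^q` "norm". -/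
noncomputable def eNq (q : ℝ≥0∞) (F : α → ℝ≥0∞) (μ : Measure α) : ℝ≥0∞ :=
  if q = ∞ then essSup F μ else (∫⁻ x, F x ^ q.toReal ∂μ) ^ (1 / q.toReal)

lemma eLpNorm_le_eNq {q : ℝ≥0∞} (hq : q ≠ 0) {h : α → ℝ} {F : α → ℝ≥0∞}
    (hb : ∀ᵐ x ∂μ, (‖h x‖₊ : ℝ≥0∞) ≤ F x) :
    eLpNorm h q μ ≤ eNq q F μ := by
  rcases eq_or_ne q ∞ with hqt | hqt
  · rw [hqt, eLpNorm_exponent_top, eNq, if_pos rfl]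
    exact essSup_mono_ae hb
  · rw [eLpNorm_eq_lintegral_rpow_enorm_toReal hq hqt, eNq, if_neg hqt]
    refine ENNReal.rpow_le_rpow ?_ (by positivity)
    refine lintegral_mono_ae (hb.mono fun x hx => ?_)
    exact ENNReal.rpow_le_rpow hx ENNReal.toReal_nonneg

lemma eNq_nnnorm_eq_eLpNorm {q : ℝ≥0∞} (hq : q ≠ 0) (g : α → ℝ) :
    eNq q (fun x => (‖g x‖₊ : ℝ≥0∞)) μ = eLpNorm g q μ := by
  rcases eq_or_ne q ∞ with hqt | hqt
  · rw [hqt, eLpNorm_exponent_top, eNq, if_pos rfl]; rfl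
  · rw [eLpNorm_eq_lintegral_rpow_enorm_toReal hq hqt, eNq, if_neg hqt]; rfl

lemma ae_lt_top_of_eNq_lt_top {q : ℝ≥0∞} (hq : q ≠ 0) {F : α → ℝ≥0∞}
    (hF : AEMeasurable F μ) (h : eNq q F μ < ∞) : ∀ᵐ x ∂μ, F x < ∞ := by
  rcases eq_or_ne q ∞ with hqt | hqt
  · rw [hqt, eNq, if_pos rfl] at h
    filter_upwards [ae_le_essSup F] with x hx using lt_of_le_of_lt hx h
  · rw [eNq, if_neg hqt] at h
    have hp : 0 < q.toReal := ENNReal.toReal_pos hq hqt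
    have hfin : ∫⁻ x, F x ^ q.toReal ∂μ ≠ ∞ := by
      intro hcon
      rw [hcon, ENNReal.top_rpow_of_pos (by positivity)] at h
      exact (lt_irrefl _ h).elim
    filter_upwards [ae_lt_top' (hF.pow_const _) hfin] with x hx
    exact (ENNReal.rpow_lt_top_iff_of_pos hp).mp hx

lemma aemeasurable_lintegral_prod_right' {β : Type*} [MeasurableSpace β] {ν : Measure β}
    [SFinite ν] {H : α × β → ℝ≥0∞} (hH : AEMeasurable H (μ.prod ν)) :
    AEMeasurable (fun x => ∫⁻ y, H (x, y) ∂ν) μ :=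
  ⟨fun x => ∫⁻ y, hH.mk H (x, y) ∂ν, hH.measurable_mk.lintegral_prod_right', by
    filter_upwards [Measure.ae_ae_of_ae_prod hH.ae_eq_mk] with x hx using lintegral_congr_ae hx⟩

end Aux

section Young

variable {d : ℕ}

local notation "E" => EuclideanSpace ℝ (Fin d)

lemma young_lintegral (q : ℝ≥0∞) (hq : 1 ≤ q) (w F : E → ℝ≥0∞)
    (hw : AEMeasurable w (volume : Measure E)) (hF : AEMeasurable F (volume : Measure E)) :
    eNq q (fun x => ∫⁻ z, w z * F (x - z)) volume ≤ (∫⁻ z, w z) * eNq q F volume := by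
  have hq0 : q ≠ 0 := by positivity
  set μ : Measure E := volume
  have hsub : Measure.QuasiMeasurePreserving (fun p : E × E => p.1 - p.2) (μ.prod μ) μ :=
    quasiMeasurePreserving_sub μ μ
  have hFst : AEMeasurable (fun p : E × E => F (p.1 - p.2)) (μ.prod μ) :=
    hF.comp_quasiMeasurePreserving hsub
  have hwsnd : AEMeasurable (fun p : E × E => w p.2) (μ.prod μ) :=
    hw.comp_quasiMeasurePreserving Measure.quasiMeasurePreserving_snd
  have hsec : ∀ x : E, AEMeasurable (fun z => F (x - z)) μ := fun x =>
    hF.comp_quasiMeasurePreserving (quasiMeasurePreserving_sub_left μ x)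
  -- the basic Fubini computation
  have swapped : ∀ (H : E → ℝ≥0∞), AEMeasurable H μ →
      ∫⁻ x, ∫⁻ z, w z * H (x - z) ∂μ ∂μ = (∫⁻ z, w z ∂μ) * ∫⁻ y, H y ∂μ := by
    intro H hH
    have hHst : AEMeasurable (fun p : E × E => H (p.1 - p.2)) (μ.prod μ) :=
      hH.comp_quasiMeasurePreserving hsub
    rw [lintegral_lintegral_swap (hwsnd.mul hHst)]
    have hinner : ∀ z : E, ∫⁻ x, w z * H (x - z) ∂μ = w z * ∫⁻ y, H y ∂μ := by
      intro z
      have hcz : AEMeasurable (fun x : E => H (x - z)) μ :=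
        hH.comp_quasiMeasurePreserving (measurePreserving_sub_right μ z).quasiMeasurePreserving
      rw [lintegral_const_mul'' _ hcz, lintegral_sub_right_eq_self H z]
    simp_rw [hinner]
    rw [lintegral_mul_const'' _ hw]
  by_cases hw0 : w =ᵐ[μ] 0
  · have hzz : ∀ x : E, ∫⁻ z, w z * F (x - z) ∂μ = 0 := by
      intro x
      have : (fun z => w z * F (x - z)) =ᵐ[μ] 0 := by
        filter_upwards [hw0] with z hz; simp [hz]
      rw [lintegral_congr_ae this]; simp
    have h0 : eNq q (fun x => ∫⁻ z, w z * F (x - z) ∂μ) μ = 0 := by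
      simp_rw [hzz]
      rcases eq_or_ne q ∞ with hqt | hqt
      · rw [hqt, eNq, if_pos rfl]
        exact le_antisymm (essSup_le_of_ae_le 0 (Filter.Eventually.of_forall fun _ => le_rfl))
          zero_le
      · rw [eNq, if_neg hqt]
        have hp : 0 < q.toReal := ENNReal.toReal_pos hq0 hqt
        simp only [ENNReal.zero_rpow_of_pos hp, lintegral_zero,
          ENNReal.zero_rpow_of_pos (one_div_pos.mpr hp)]
    rw [h0]; exact zero_le
  have hI : ∫⁻ z, w z ∂μ ≠ 0 := fun hcon => hw0 ((lintegral_eq_zero_iff' hw).mp hcon)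
  rcases eq_or_ne q ∞ with hqt | hqt
  · -- q = ∞
    subst hqt
    rw [eNq, if_pos rfl, eNq, if_pos rfl]
    set M := essSup F μ with hM
    rcases eq_or_ne M ∞ with hMt | hMt
    · rw [hMt, ENNReal.mul_top hI]; exact le_top
    have hae : ∀ᵐ x ∂μ, ∀ᵐ z ∂μ, F (x - z) ≤ M :=
      Measure.ae_ae_of_ae_prod (hsub.ae (ae_le_essSup F))
    refine essSup_le_of_ae_le _ ?_
    filter_upwards [hae] with x hx
    calc ∫⁻ z, w z * F (x - z) ∂μ ≤ ∫⁻ z, w z * M ∂μ :=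
          lintegral_mono_ae (hx.mono fun z hz => mul_le_mul_right hz _)
      _ = (∫⁻ z, w z ∂μ) * M := lintegral_mul_const' M _ hMt
  · -- q finite
    rw [eNq, if_neg hqt, eNq, if_neg hqt]
    set p := q.toReal with hp
    have hp1 : 1 ≤ p := by
      rw [hp, ← ENNReal.toReal_one]
      exact ENNReal.toReal_mono hqt hq
    have hp0 : 0 < p := lt_of_lt_of_le one_pos hp1
    rcases eq_or_lt_of_le hp1 with hp1' | hp1'
    · -- p = 1
      have hp1eq : p = 1 := hp1'.symm
      simp_rw [hp1eq, one_div_one, ENNReal.rpow_one]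
      rw [swapped F hF]
    · -- 1 < p
      set r := Real.conjExponent p with hr
      have hconj : p.HolderConjugate r := Real.HolderConjugate.conjExponent hp1'
      have hconj' : r.HolderConjugate p := hconj.symm
      have hrinv : 1 / r + 1 / p = 1 := by
        simpa [one_div] using hconj'.inv_add_inv_eq_one
      have hr0 : r ≠ 0 := hconj'.ne_zero
      have key : ∀ x : E, (∫⁻ z, w z * F (x - z) ∂μ) ^ p ≤
          (∫⁻ z, w z ∂μ) ^ (p - 1) * ∫⁻ z, w z * F (x - z) ^ p ∂μ := by
        intro x
        have hae1 : AEMeasurable (fun z => w z ^ (1 / r)) μ := hw.pow_const _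
        have hae2 : AEMeasurable (fun z => w z ^ (1 / p) * F (x - z)) μ :=
          (hw.pow_const _).mul (hsec x)
        have split : ∀ z : E, w z * F (x - z) =
            (w z ^ (1 / r)) * (w z ^ (1 / p) * F (x - z)) := by
          intro z
          rw [← mul_assoc, ← ENNReal.rpow_add_of_nonneg _ _
            hconj'.one_div_nonneg hconj.one_div_nonneg, hrinv, ENNReal.rpow_one]
        have hHolder : ∫⁻ z, w z * F (x - z) ∂μ ≤
            (∫⁻ z, w z ∂μ) ^ (1 / r) * (∫⁻ z, w z * F (x - z) ^ p ∂μ) ^ (1 / p) := by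
          calc ∫⁻ z, w z * F (x - z) ∂μ
              = ∫⁻ z, ((fun z => w z ^ (1 / r)) * fun z => w z ^ (1 / p) * F (x - z)) z ∂μ := by
                simp_rw [Pi.mul_apply, ← split]
            _ ≤ (∫⁻ z, (w z ^ (1 / r)) ^ r ∂μ) ^ (1 / r) *
                (∫⁻ z, (w z ^ (1 / p) * F (x - z)) ^ p ∂μ) ^ (1 / p) :=
                ENNReal.lintegral_mul_le_Lp_mul_Lq μ hconj' hae1 hae2
            _ = (∫⁻ z, w z ∂μ) ^ (1 / r) * (∫⁻ z, w z * F (x - z) ^ p ∂μ) ^ (1 / p) := by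
                congr 2
                · refine lintegral_congr fun z => ?_
                  rw [← ENNReal.rpow_mul, one_div, inv_mul_cancel₀ hr0, ENNReal.rpow_one]
                · refine lintegral_congr fun z => ?_
                  rw [ENNReal.mul_rpow_of_nonneg _ _ hp0.le, ← ENNReal.rpow_mul, one_div,
                    inv_mul_cancel₀ hp0.ne', ENNReal.rpow_one]
        calc (∫⁻ z, w z * F (x - z) ∂μ) ^ p
            ≤ ((∫⁻ z, w z ∂μ) ^ (1 / r) * (∫⁻ z, w z * F (x - z) ^ p ∂μ) ^ (1 / p)) ^ p :=
              ENNReal.rpow_le_rpow hHolder hp0.le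
          _ = (∫⁻ z, w z ∂μ) ^ (p - 1) * ∫⁻ z, w z * F (x - z) ^ p ∂μ := by
              rw [ENNReal.mul_rpow_of_nonneg _ _ hp0.le, ← ENNReal.rpow_mul,
                ← ENNReal.rpow_mul]
              congr 1
              · congr 1
                rw [one_div, inv_mul_eq_div, hconj.div_conj_eq_sub_one]
              · rw [one_div, inv_mul_cancel₀ hp0.ne', ENNReal.rpow_one]
      calc (∫⁻ x, (∫⁻ z, w z * F (x - z) ∂μ) ^ p ∂μ) ^ (1 / p)
          ≤ ((∫⁻ z, w z ∂μ) ^ (p - 1) * ∫⁻ x, ∫⁻ z, w z * F (x - z) ^ p ∂μ ∂μ) ^ (1 / p) := by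
            refine ENNReal.rpow_le_rpow ?_ (by positivity)
            calc ∫⁻ x, (∫⁻ z, w z * F (x - z) ∂μ) ^ p ∂μ
                ≤ ∫⁻ x, (∫⁻ z, w z ∂μ) ^ (p - 1) * ∫⁻ z, w z * F (x - z) ^ p ∂μ ∂μ :=
                  lintegral_mono fun x => key x
              _ = _ := lintegral_const_mul'' _
                  (aemeasurable_lintegral_prod_right' (hwsnd.mul (hFst.pow_const p)))
        _ = ((∫⁻ z, w z ∂μ) ^ p * ∫⁻ y, F y ^ p ∂μ) ^ (1 / p) := by
            rw [swapped (fun y => F y ^ p) (hF.pow_const p), ← mul_assoc]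
            have h2 := ENNReal.rpow_add_of_nonneg (x := ∫⁻ z, w z ∂μ) (p - 1) 1
              (by linarith) zero_le_one
            rw [sub_add_cancel, ENNReal.rpow_one] at h2
            rw [← h2]
        _ = (∫⁻ z, w z ∂μ) * (∫⁻ y, F y ^ p ∂μ) ^ (1 / p) := by
            rw [ENNReal.mul_rpow_of_nonneg _ _ (by positivity), ← ENNReal.rpow_mul,
              mul_one_div, div_self hp0.ne', ENNReal.rpow_one]

end Young

/-- Convolution `(φ ∗ h)(x) = ∫ φ(z) h(x−z) dz` on `ℝ^d`. -/
noncomputable def convOp {d : ℕ} (φ h : EuclideanSpace ℝ (Fin d) → ℝ) :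
    EuclideanSpace ℝ (Fin d) → ℝ :=
  fun x => ∫ z, φ z * h (x - z)

/-- Borderline (`δ = 1`) commutator estimate: if `φ, |x|φ ∈ L¹`, `f` is Lipschitz with
constant `L` and `g ∈ L^q`, then
`‖φ ∗ (fg) − f (φ ∗ g)‖_{L^q} ≤ L ‖|x| φ‖_{L¹} ‖g‖_{L^q}`. -/
theorem commutator_lipschitz_estimate (d : ℕ) (hd : 1 ≤ d) (q : ℝ≥0∞) (hq : 1 ≤ q)
    (φ f g : EuclideanSpace ℝ (Fin d) → ℝ) (L : ℝ≥0)
    (hφ : MemLp φ 1 volume)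
    (hφw : MemLp (fun x => ‖x‖ * φ x) 1 volume)
    (hf : LipschitzWith L f)
    (hg : MemLp g q volume) :
    eLpNorm (fun x => convOp φ (fun y => f y * g y) x - f x * convOp φ g x) q volume ≤
      (L : ℝ≥0∞) * eLpNorm (fun x => ‖x‖ * φ x) 1 volume * eLpNorm g q volume := by
  set μ : Measure (EuclideanSpace ℝ (Fin d)) := volume
  have hq0 : q ≠ 0 := by positivity
  set w1 : (EuclideanSpace ℝ (Fin d)) → ℝ≥0∞ := fun z => (‖φ z‖₊ : ℝ≥0∞) with hw1
  set w2 : (EuclideanSpace ℝ (Fin d)) → ℝ≥0∞ := fun z => (L : ℝ≥0∞) * ‖z‖₊ * ‖φ z‖₊ with hw2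
  set G : (EuclideanSpace ℝ (Fin d)) → ℝ≥0∞ := fun x => (‖g x‖₊ : ℝ≥0∞) with hG
  have hw1m : AEMeasurable w1 μ := by rw [hw1]; exact hφ.1.enorm
  have hnormm : Measurable (fun z : (EuclideanSpace ℝ (Fin d)) => (‖z‖₊ : ℝ≥0∞)) :=
    measurable_nnnorm.coe_nnreal_ennreal
  have hw2m : AEMeasurable w2 μ := ((aemeasurable_const.mul hnormm.aemeasurable).mul hw1m)
  have hGm : AEMeasurable G μ := by rw [hG]; exact hg.1.enorm
  set A : (EuclideanSpace ℝ (Fin d)) → ℝ≥0∞ := fun x => ∫⁻ z, w1 z * G (x - z) ∂μ with hA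
  set B : (EuclideanSpace ℝ (Fin d)) → ℝ≥0∞ := fun x => ∫⁻ z, w2 z * G (x - z) ∂μ with hB
  -- integrals of the weights
  have hI1 : ∫⁻ z, w1 z ∂μ = eLpNorm φ 1 μ := by
    rw [eLpNorm_one_eq_lintegral_enorm]; rfl
  have hI2 : ∫⁻ z, w2 z ∂μ = (L : ℝ≥0∞) * eLpNorm (fun x => ‖x‖ * φ x) 1 μ := by
    rw [eLpNorm_one_eq_lintegral_enorm]
    have hnn : ∀ z : EuclideanSpace ℝ (Fin d), (‖(‖z‖ * φ z)‖₊ : ℝ≥0∞) =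
        (fun z => (‖z‖₊ : ℝ≥0∞) * ‖φ z‖₊) z := by
      intro z
      rw [nnnorm_mul, nnnorm_norm, ENNReal.coe_mul]
    simp_rw [enorm_eq_nnnorm]
    simp_rw [hnn]
    rw [← lintegral_const_mul'' (L : ℝ≥0∞) (by exact hnormm.aemeasurable.mul hφ.1.enorm : AEMeasurable (fun z => (‖z‖₊ : ℝ≥0∞) * ‖φ z‖₊) μ)]
    refine lintegral_congr fun z => ?_
    simp only [hw2]
    ring
  have hGnorm : eNq q G μ = eLpNorm g q μ := eNq_nnnorm_eq_eLpNorm hq0 g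
  -- Young's inequality for both kernels
  have hYA : eNq q A μ ≤ (∫⁻ z, w1 z ∂μ) * eNq q G μ := young_lintegral q hq w1 G hw1m hGm
  have hYB : eNq q B μ ≤ (∫⁻ z, w2 z ∂μ) * eNq q G μ := young_lintegral q hq w2 G hw2m hGm
  -- measurability of A and B
  have hsub : Measure.QuasiMeasurePreserving (fun p : (EuclideanSpace ℝ (Fin d)) × (EuclideanSpace ℝ (Fin d)) => p.1 - p.2) (μ.prod μ) μ :=
    quasiMeasurePreserving_sub μ μ
  have hGst : AEMeasurable (fun p : (EuclideanSpace ℝ (Fin d)) × (EuclideanSpace ℝ (Fin d)) => G (p.1 - p.2)) (μ.prod μ) :=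
    hGm.comp_quasiMeasurePreserving hsub
  have hw1snd : AEMeasurable (fun p : (EuclideanSpace ℝ (Fin d)) × (EuclideanSpace ℝ (Fin d)) => w1 p.2) (μ.prod μ) :=
    hw1m.comp_quasiMeasurePreserving Measure.quasiMeasurePreserving_snd
  have hw2snd : AEMeasurable (fun p : (EuclideanSpace ℝ (Fin d)) × (EuclideanSpace ℝ (Fin d)) => w2 p.2) (μ.prod μ) :=
    hw2m.comp_quasiMeasurePreserving Measure.quasiMeasurePreserving_snd
  have hAm : AEMeasurable A μ := aemeasurable_lintegral_prod_right' (hw1snd.mul hGst)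
  have hBm : AEMeasurable B μ := aemeasurable_lintegral_prod_right' (hw2snd.mul hGst)
  -- a.e. finiteness of A and B
  have hAfin : ∀ᵐ x ∂μ, A x < ∞ := by
    refine ae_lt_top_of_eNq_lt_top hq0 hAm (lt_of_le_of_lt hYA ?_)
    rw [hI1, hGnorm]
    exact ENNReal.mul_lt_top hφ.2 hg.2
  have hBfin : ∀ᵐ x ∂μ, B x < ∞ := by
    refine ae_lt_top_of_eNq_lt_top hq0 hBm (lt_of_le_of_lt hYB ?_)
    rw [hI2, hGnorm]
    exact ENNReal.mul_lt_top (ENNReal.mul_lt_top ENNReal.coe_lt_top hφw.2) hg.2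
  -- a.e. measurability of the section z ↦ g (x - z)
  have hsecae : ∀ᵐ x ∂μ, AEStronglyMeasurable (fun z => g (x - z)) μ := by
    have : AEStronglyMeasurable (fun p : (EuclideanSpace ℝ (Fin d)) × (EuclideanSpace ℝ (Fin d)) => g (p.1 - p.2)) (μ.prod μ) :=
      hg.1.comp_quasiMeasurePreserving hsub
    exact this.prodMk_left
  -- the pointwise bound
  have hpt : ∀ᵐ x ∂μ,
      (‖convOp φ (fun y => f y * g y) x - f x * convOp φ g x‖₊ : ℝ≥0∞) ≤ B x := by
    filter_upwards [hAfin, hBfin, hsecae] with x hAx hBx hmx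
    have hfc : Continuous fun z : (EuclideanSpace ℝ (Fin d)) => f (x - z) :=
      hf.continuous.comp (continuous_sub_left x)
    have hlip : ∀ z : (EuclideanSpace ℝ (Fin d)), (‖f (x - z) - f x‖₊ : ℝ≥0) ≤ L * ‖z‖₊ := by
      intro z
      have := hf.nndist_le (x - z) x
      rw [nndist_eq_nnnorm] at this
      refine le_trans this ?_
      have : nndist (x - z) x = ‖z‖₊ := by
        rw [nndist_eq_nnnorm, sub_sub_cancel_left, nnnorm_neg]
      rw [this]
    -- integrability of both integrands
    have hIg : Integrable (fun z => φ z * g (x - z)) μ := by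
      refine ⟨hφ.1.mul hmx, ?_⟩
      rw [HasFiniteIntegral]
      simp_rw [enorm_eq_nnnorm]
      have : ∀ z : (EuclideanSpace ℝ (Fin d)), (‖φ z * g (x - z)‖₊ : ℝ≥0∞) = w1 z * G (x - z) := by
        intro z; simp [hw1, hG, nnnorm_mul]
      simp_rw [this]
      exact hAx
    have hIfg : Integrable (fun z => φ z * (f (x - z) * g (x - z))) μ := by
      refine ⟨hφ.1.mul (hfc.aestronglyMeasurable.mul hmx), ?_⟩
      rw [HasFiniteIntegral]
      have hb : ∀ z : (EuclideanSpace ℝ (Fin d)), (‖φ z * (f (x - z) * g (x - z))‖₊ : ℝ≥0∞) ≤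
          (‖f x‖₊ : ℝ≥0∞) * (w1 z * G (x - z)) + w2 z * G (x - z) := by
        intro z
        have h1 : (‖f (x - z)‖₊ : ℝ≥0) ≤ ‖f x‖₊ + L * ‖z‖₊ := by
          calc ‖f (x - z)‖₊ = ‖f x + (f (x - z) - f x)‖₊ := by ring_nf
            _ ≤ ‖f x‖₊ + ‖f (x - z) - f x‖₊ := nnnorm_add_le _ _
            _ ≤ ‖f x‖₊ + L * ‖z‖₊ := add_le_add le_rfl (hlip z)
        have h2 : (‖φ z * (f (x - z) * g (x - z))‖₊ : ℝ≥0) ≤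
            (‖f x‖₊ + L * ‖z‖₊) * (‖φ z‖₊ * ‖g (x - z)‖₊) := by
          rw [nnnorm_mul, nnnorm_mul]
          calc ‖φ z‖₊ * (‖f (x - z)‖₊ * ‖g (x - z)‖₊)
              ≤ ‖φ z‖₊ * ((‖f x‖₊ + L * ‖z‖₊) * ‖g (x - z)‖₊) := by
                gcongr
            _ = (‖f x‖₊ + L * ‖z‖₊) * (‖φ z‖₊ * ‖g (x - z)‖₊) := by ring
        calc (‖φ z * (f (x - z) * g (x - z))‖₊ : ℝ≥0∞)
            ≤ ((‖f x‖₊ + L * ‖z‖₊ : ℝ≥0) : ℝ≥0∞) * ((‖φ z‖₊ * ‖g (x - z)‖₊ : ℝ≥0) : ℝ≥0∞) := by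
              rw [← ENNReal.coe_mul]
              exact_mod_cast h2
          _ = (‖f x‖₊ : ℝ≥0∞) * (w1 z * G (x - z)) + w2 z * G (x - z) := by
              push_cast
              simp only [hw1, hw2, hG]
              ring
      calc ∫⁻ z, (‖φ z * (f (x - z) * g (x - z))‖₊ : ℝ≥0∞) ∂μ
          ≤ ∫⁻ z, ((‖f x‖₊ : ℝ≥0∞) * (w1 z * G (x - z)) + w2 z * G (x - z)) ∂μ :=
            lintegral_mono hb
        _ = (‖f x‖₊ : ℝ≥0∞) * A x + B x := by
            have hsecx : AEMeasurable (fun z : EuclideanSpace ℝ (Fin d) => G (x - z)) μ :=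
              hGm.comp_quasiMeasurePreserving (quasiMeasurePreserving_sub_left μ x)
            rw [lintegral_add_left' (by exact aemeasurable_const.mul (hw1m.mul hsecx) : AEMeasurable (fun z => (‖f x‖₊ : ℝ≥0∞) * (w1 z * G (x - z))) μ),
              lintegral_const_mul'' _ (by exact hw1m.mul hsecx : AEMeasurable (fun z => w1 z * G (x - z)) μ)]
        _ < ∞ := ENNReal.add_lt_top.mpr
            ⟨ENNReal.mul_lt_top ENNReal.coe_lt_top hAx, hBx⟩
    -- the commutator identity
    have hid : convOp φ (fun y => f y * g y) x - f x * convOp φ g x =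
        ∫ z, (φ z * (f (x - z) * g (x - z)) - f x * (φ z * g (x - z))) ∂μ := by
      rw [integral_sub hIfg (hIg.const_mul (f x)), integral_const_mul]
      rfl
    rw [hid]
    refine le_trans (enorm_integral_le_lintegral_enorm _) ?_
    refine lintegral_mono fun z => ?_
    have hrw : φ z * (f (x - z) * g (x - z)) - f x * (φ z * g (x - z)) =
        (φ z * g (x - z)) * (f (x - z) - f x) := by ring
    rw [hrw]
    have h3 : (‖(φ z * g (x - z)) * (f (x - z) - f x)‖₊ : ℝ≥0) ≤
        (L * ‖z‖₊ * ‖φ z‖₊) * ‖g (x - z)‖₊ := by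
      rw [nnnorm_mul, nnnorm_mul]
      calc ‖φ z‖₊ * ‖g (x - z)‖₊ * ‖f (x - z) - f x‖₊
          ≤ ‖φ z‖₊ * ‖g (x - z)‖₊ * (L * ‖z‖₊) := by gcongr; exact hlip z
        _ = (L * ‖z‖₊ * ‖φ z‖₊) * ‖g (x - z)‖₊ := by ring
    calc (‖(φ z * g (x - z)) * (f (x - z) - f x)‖₊ : ℝ≥0∞)
        ≤ (((L * ‖z‖₊ * ‖φ z‖₊) * ‖g (x - z)‖₊ : ℝ≥0) : ℝ≥0∞) := by exact_mod_cast h3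
      _ = w2 z * G (x - z) := by push_cast; simp only [hw2, hG]
  -- conclusion
  calc eLpNorm (fun x => convOp φ (fun y => f y * g y) x - f x * convOp φ g x) q μ
      ≤ eNq q B μ := eLpNorm_le_eNq hq0 hpt
    _ ≤ (∫⁻ z, w2 z ∂μ) * eNq q G μ := hYB
    _ = (L : ℝ≥0∞) * eLpNorm (fun x => ‖x‖ * φ x) 1 μ * eLpNorm g q μ := by
        rw [hI2, hGnorm]
end

section
/- Let θ : ℝ² → ℝ satisfy θ ∈ L²(ℝ²), ∇θ ∈ L²(ℝ²), and ∇θ ∈ L^∞(ℝ²). Then θ ∈ L^∞(ℝ²) and ‖θ‖_{L^∞} ≤ 6^{1/3} · ‖∇θ‖_{L^∞}^{1/3} · ‖θ‖_{L²}^{1/3} · ‖∇θ‖_{L²}^{1/3}. -/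
/-!
A `C¹` function with bounded gradient is Lipschitz, and a uniformly continuous `L²` function on
the plane vanishes at infinity. Hence, integrating the derivative of `|θ|^(n+1)` along a ray,
`|θ(x)|^(n+1) ≤ (n+1) ∫₀^∞ |θ|^n |∇θ|` on that ray. With `n = 1` on vertical rays,
`|θ(p)|² ≤ 2 ∫_ℝ |θ| |∇θ|` on the vertical line through `p`; with `n = 2` on a horizontal ray and
Fubini, `|θ(x)|³ ≤ 3 ‖∇θ‖_∞ ∫_ℝ |θ(x + t e₀)|² dt ≤ 6 ‖∇θ‖_∞ ∫ |θ| |∇θ|`, and Cauchy–Schwarz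
bounds the last integral by `‖θ‖₂ ‖∇θ‖₂`.
-/

open MeasureTheory Filter Set Topology Bornology Metric
open scoped ENNReal

theorem Continuous.enorm_le_eLpNorm_top {X E : Type*} [TopologicalSpace X] [MeasurableSpace X]
    {μ : Measure X} [μ.IsOpenPosMeasure] [NormedAddCommGroup E] {f : X → E}
    (hf : Continuous f) (x : X) : ‖f x‖ₑ ≤ eLpNorm f ⊤ μ := by
  have hdense : Dense {x | ‖f x‖ₑ ≤ eLpNorm f ⊤ μ} := μ.dense_of_ae ae_le_eLpNormEssSup
  have hclosed : IsClosed {x | ‖f x‖ₑ ≤ eLpNorm f ⊤ μ} := isClosed_le hf.enorm continuous_const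
  exact eq_univ_iff_forall.1 (hclosed.closure_eq ▸ hdense.closure_eq) x

theorem enorm_le_lintegral_Ioi_enorm_deriv {E : Type*} [NormedAddCommGroup E] [NormedSpace ℝ E]
    [CompleteSpace E] {f f' : ℝ → E} (hf : ∀ t, HasDerivAt f (f' t) t)
    (hf' : LocallyIntegrable f') (hlim : Tendsto f atTop (𝓝 0)) :
    ‖f 0‖ₑ ≤ ∫⁻ t in Ioi 0, ‖f' t‖ₑ := by
  set J := ∫⁻ t in Ioi 0, ‖f' t‖ₑ
  have hbound : ∀ T ≥ (0 : ℝ), ‖f 0‖ₑ ≤ ‖f T‖ₑ + J := by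
    intro T hT
    have hftc : f 0 = f T - ∫ t in (0 : ℝ)..T, f' t := by
      rw [intervalIntegral.integral_eq_sub_of_hasDerivAt (fun t _ ↦ hf t)
        (hf'.integrableOn_isCompact isCompact_uIcc).intervalIntegrable]
      abel
    calc ‖f 0‖ₑ ≤ ‖f T‖ₑ + ‖∫ t in (0 : ℝ)..T, f' t‖ₑ := hftc ▸ enorm_sub_le
      _ ≤ ‖f T‖ₑ + ∫⁻ t in Ioc 0 T, ‖f' t‖ₑ := by
        rw [intervalIntegral.integral_of_le hT]
        gcongr
        exact enorm_integral_le_lintegral_enorm _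
      _ ≤ ‖f T‖ₑ + J := by gcongr; exact lintegral_mono_set Ioc_subset_Ioi_self
  have hlim' : Tendsto (fun T ↦ ‖f T‖ₑ + J) atTop (𝓝 J) := by
    simpa using ((continuous_enorm.tendsto (0 : E)).comp hlim).add_const J
  exact ge_of_tendsto hlim' ((eventually_ge_atTop 0).mono hbound)

theorem tendsto_add_smul_cobounded {E : Type*} [NormedAddCommGroup E] [NormedSpace ℝ E]
    (x : E) {v : E} (hv : v ≠ 0) : Tendsto (fun t : ℝ ↦ x + t • v) atTop (cobounded E) := by
  rw [← tendsto_norm_atTop_iff_cobounded]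
  refine tendsto_atTop_mono (fun t ↦ ?_) (tendsto_atTop_add_const_right _ (-‖x‖)
    (tendsto_id.atTop_mul_const (norm_pos_iff.2 hv)))
  have hsmul : t * ‖v‖ ≤ ‖t • v‖ := by
    rw [norm_smul, Real.norm_eq_abs]; gcongr; exact le_abs_self t
  have htriangle : ‖t • v‖ - ‖x‖ ≤ ‖x + t • v‖ := by
    simpa [add_comm] using norm_sub_norm_le (t • v) (-x)
  simp only [id]
  linarith

theorem tendsto_measure_compl_closedBall_atTop {X : Type*} [PseudoMetricSpace X]
    [MeasurableSpace X] [OpensMeasurableSpace X] (ν : Measure X) [IsFiniteMeasure ν] (x : X) :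
    Tendsto (fun R : ℝ ↦ ν (closedBall x R)ᶜ) atTop (𝓝 0) := by
  have hempty : ⋂ R : ℝ, (closedBall x R)ᶜ = ∅ :=
    iInter_eq_empty_iff.2 fun y ↦ ⟨dist y x, by simp⟩
  have := tendsto_measure_iInter_atTop (μ := ν) (s := fun R ↦ (closedBall x R)ᶜ)
    (fun R ↦ measurableSet_closedBall.compl.nullMeasurableSet)
    (fun R R' h ↦ compl_subset_compl.2 (closedBall_subset_closedBall h))
    ⟨0, measure_ne_top ν _⟩
  rwa [hempty, measure_empty] at this

/-- The superlevel set `{‖f‖ ≥ ε / 2}` has finite measure, so it cannot contain balls of a fixed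
radius arbitrarily far out; but it contains a ball around every far point where `‖f‖ ≥ ε`. -/
theorem UniformContinuous.tendsto_cobounded_zero_of_memLp {E F : Type*} [NormedAddCommGroup E]
    [NormedSpace ℝ E] [FiniteDimensional ℝ E] [MeasurableSpace E] [BorelSpace E]
    {μ : Measure E} [μ.IsAddHaarMeasure] [NormedAddCommGroup F] {f : E → F} {p : ℝ≥0∞}
    (huc : UniformContinuous f) (hf : MemLp f p μ) (hp0 : p ≠ 0) (hp : p ≠ ⊤) :
    Tendsto f (cobounded E) (𝓝 0) := by
  rw [Metric.tendsto_nhds]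
  by_contra! h
  obtain ⟨ε, hε, hfar⟩ := h
  obtain ⟨δ, hδ, hclose⟩ := Metric.uniformContinuous_iff.1 huc (ε / 2) (half_pos hε)
  set S := {y | ENNReal.ofReal (ε / 2) ≤ ‖f y‖ₑ}
  have : IsFiniteMeasure (μ.restrict S) := isFiniteMeasure_restrict.2
    (hf.meas_ge_lt_top'_enorm hp0 hp (by simpa using hε) (by simp)).ne
  obtain ⟨R, hR⟩ := ((tendsto_measure_compl_closedBall_atTop (μ.restrict S) 0).eventually
    (gt_mem_nhds (measure_ball_pos μ (0 : E) hδ))).exists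
  obtain ⟨x, hx, hfx⟩ := hasBasis_cobounded_norm.frequently_iff.1 hfar (R + δ) trivial
  have hball : ball x δ ⊆ (closedBall 0 R)ᶜ ∩ S := by
    intro y hy
    rw [mem_ball] at hy
    have hfy := dist_comm (f y) (f x) ▸ hclose hy
    refine ⟨?_, ?_⟩
    · have hxy : ‖x‖ - ‖y‖ ≤ dist y x := by
        rw [dist_comm, dist_eq_norm]; exact norm_sub_norm_le x y
      simp only [mem_compl_iff, mem_closedBall, dist_zero_right, not_le]
      linarith [show R + δ ≤ ‖x‖ from hx]
    · show ENNReal.ofReal (ε / 2) ≤ ‖f y‖ₑ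
      rw [← ofReal_norm]
      refine ENNReal.ofReal_le_ofReal ?_
      rw [dist_zero_right] at hfx
      linarith [norm_sub_norm_le (f x) (f y), dist_eq_norm (f x) (f y)]
  have hfar_ball : μ (ball 0 δ) ≤ μ.restrict S (closedBall 0 R)ᶜ := by
    rw [Measure.restrict_apply measurableSet_closedBall.compl, ← Measure.addHaar_ball_center μ x]
    exact measure_mono hball
  exact (hfar_ball.trans_lt hR).false

theorem enorm_pow_succ_le_lintegral_ray {E : Type*} [NormedAddCommGroup E] [NormedSpace ℝ E]
    {f : E → ℝ} (hf : ContDiff ℝ 1 f) (hlim : Tendsto f (cobounded E) (𝓝 0)) (x : E) {v : E}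
    (hv : v ≠ 0) (n : ℕ) :
    ‖f x‖ₑ ^ (n + 1) ≤
      (n + 1) * ‖v‖ₑ * ∫⁻ t in Ioi (0 : ℝ), ‖f (x + t • v)‖ₑ ^ n * ‖fderiv ℝ f (x + t • v)‖ₑ := by
  set γ : ℝ → E := fun t ↦ x + t • v
  have hγ (t : ℝ) : HasDerivAt γ v t := by
    simpa only [one_smul] using ((hasDerivAt_id' t).smul_const v).const_add x
  have hderiv (t : ℝ) : HasDerivAt (fun t ↦ f (γ t) ^ (n + 1))
      ((n + 1) * f (γ t) ^ n * fderiv ℝ f (γ t) v) t := by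
    have hfγ := (hf.differentiable one_ne_zero (γ t)).hasFDerivAt.comp_hasDerivAt t (hγ t)
    simpa using hfγ.fun_pow (n + 1)
  have hcont : Continuous fun t ↦ (n + 1) * f (γ t) ^ n * fderiv ℝ f (γ t) v := by
    have := hf.continuous_fderiv one_ne_zero
    fun_prop
  have hdecay : Tendsto (fun t ↦ f (γ t) ^ (n + 1)) atTop (𝓝 0) := by
    simpa using (hlim.comp (tendsto_add_smul_cobounded x hv)).pow (n + 1)
  calc ‖f x‖ₑ ^ (n + 1) = ‖f (γ 0) ^ (n + 1)‖ₑ := by simp [γ, enorm_pow]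
    _ ≤ ∫⁻ t in Ioi 0, ‖(n + 1) * f (γ t) ^ n * fderiv ℝ f (γ t) v‖ₑ :=
      enorm_le_lintegral_Ioi_enorm_deriv hderiv hcont.locallyIntegrable hdecay
    _ ≤ ∫⁻ t in Ioi 0, (n + 1) * ‖v‖ₑ * (‖f (γ t)‖ₑ ^ n * ‖fderiv ℝ f (γ t)‖ₑ) := by
      refine lintegral_mono fun t ↦ ?_
      have hnorm : ‖((n : ℝ) + 1)‖ₑ = n + 1 := by
        rw [← ofReal_norm, Real.norm_of_nonneg (by positivity)]
        simp [ENNReal.ofReal_add]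
      rw [enorm_mul, enorm_mul, enorm_pow, hnorm]
      calc (n + 1) * ‖f (γ t)‖ₑ ^ n * ‖fderiv ℝ f (γ t) v‖ₑ
          ≤ (n + 1) * ‖f (γ t)‖ₑ ^ n * (‖fderiv ℝ f (γ t)‖ₑ * ‖v‖ₑ) := by
            gcongr; exact ContinuousLinearMap.le_opENorm _ _
        _ = _ := by ring
    _ = _ := lintegral_const_mul' _ _ (ENNReal.mul_ne_top (by finiteness) enorm_ne_top)

local notation "ℝ²" => EuclideanSpace ℝ (Fin 2)
local notation "e₀" => EuclideanSpace.single (0 : Fin 2) (1 : ℝ)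
local notation "e₁" => EuclideanSpace.single (1 : Fin 2) (1 : ℝ)

theorem EuclideanSpace.measurePreserving_add_smul_single_fin_two (x₀ : ℝ²) :
    MeasurePreserving (fun p : ℝ × ℝ ↦ x₀ + p.1 • e₀ + p.2 • e₁)
      ((volume : Measure ℝ).prod volume) volume := by
  have hcoords : MeasurePreserving (fun p : ℝ × ℝ ↦ WithLp.toLp 2 ![p.1, p.2])
      ((volume : Measure ℝ).prod volume) volume :=
    (PiLp.volume_preserving_toLp (Fin 2)).comp
      (Measure.volume_eq_prod ℝ ℝ ▸ (volume_preserving_finTwoArrow ℝ).symm)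
  convert (measurePreserving_add_left volume x₀).comp hcoords using 1
  ext p i
  fin_cases i <;> simp [add_assoc]

theorem EuclideanSpace.lintegral_fin_two_eq_lintegral_lintegral (x₀ : ℝ²) {G : ℝ² → ℝ≥0∞}
    (hG : Measurable G) :
    ∫⁻ y, G y = ∫⁻ t : ℝ, ∫⁻ s : ℝ, G (x₀ + t • e₀ + s • e₁) := by
  have hmp := EuclideanSpace.measurePreserving_add_smul_single_fin_two x₀
  rw [← hmp.lintegral_comp hG]
  exact lintegral_prod (G ∘ _) (hG.comp hmp.measurable).aemeasurable

theorem lintegral_enorm_mul_le_eLpNorm_two_mul {α F : Type*} [MeasurableSpace α] {μ : Measure α}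
    [NormedAddCommGroup F] [NormedSpace ℝ F] {f : α → ℝ} {g : α → F}
    (hf : AEStronglyMeasurable f μ) (hg : AEStronglyMeasurable g μ) :
    ∫⁻ x, ‖f x‖ₑ * ‖g x‖ₑ ∂μ ≤ eLpNorm f 2 μ * eLpNorm g 2 μ := by
  have : ENNReal.HolderTriple 2 2 1 := ENNReal.holderConjugate_iff.2 ENNReal.inv_two_add_inv_two
  simpa [eLpNorm_one_eq_lintegral_enorm, enorm_smul] using
    eLpNorm_smul_le_mul_eLpNorm (p := 2) (q := 2) (r := 1) hg hf

theorem enorm_pow_three_le_of_enorm_fderiv_le {f : ℝ² → ℝ} (hf : ContDiff ℝ 1 f)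
    (hlim : Tendsto f (cobounded ℝ²) (𝓝 0)) {L : ℝ≥0∞} (hL : ∀ y, ‖fderiv ℝ f y‖ₑ ≤ L) (x : ℝ²) :
    ‖f x‖ₑ ^ 3 ≤ 6 * L * ∫⁻ y, ‖f y‖ₑ * ‖fderiv ℝ f y‖ₑ := by
  set G : ℝ² → ℝ≥0∞ := fun y ↦ ‖f y‖ₑ * ‖fderiv ℝ f y‖ₑ
  have hG : Measurable G :=
    hf.continuous.enorm.measurable.mul (hf.continuous_fderiv one_ne_zero).enorm.measurable
  have hsingle (i : Fin 2) : ‖EuclideanSpace.single i (1 : ℝ)‖ₑ = 1 := by simp [enorm_eq_nnnorm]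
  have hvertical (p : ℝ²) : ‖f p‖ₑ ^ 2 ≤ 2 * ∫⁻ s : ℝ, G (p + s • e₁) := by
    have hray := enorm_pow_succ_le_lintegral_ray hf hlim p (v := e₁) (by simp) 1
    norm_num [hsingle] at hray
    exact hray.trans (mul_le_mul_right (setLIntegral_le_lintegral _ _) 2)
  have hhorizontal := enorm_pow_succ_le_lintegral_ray hf hlim x (v := e₀) (by simp) 2
  norm_num [hsingle] at hhorizontal
  calc ‖f x‖ₑ ^ 3 ≤ 3 * ∫⁻ t in Ioi (0 : ℝ), ‖f (x + t • e₀)‖ₑ ^ 2 * ‖fderiv ℝ f (x + t • e₀)‖ₑ :=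
        hhorizontal
    _ ≤ 3 * ∫⁻ t : ℝ, (2 * ∫⁻ s : ℝ, G (x + t • e₀ + s • e₁)) * L := by
      refine mul_le_mul_right ((setLIntegral_le_lintegral _ _).trans (lintegral_mono fun t ↦ ?_)) 3
      exact mul_le_mul' (hvertical _) (hL _)
    _ = 6 * L * ∫⁻ y, G y := by
      have hmeas : Measurable fun t : ℝ ↦ ∫⁻ s : ℝ, G (x + t • e₀ + s • e₁) :=
        (hG.comp (EuclideanSpace.measurePreserving_add_smul_single_fin_two x).measurable)
          |>.lintegral_prod_right'
      rw [lintegral_mul_const _ (hmeas.const_mul 2), lintegral_const_mul _ hmeas,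
        ← EuclideanSpace.lintegral_fin_two_eq_lintegral_lintegral x hG]
      ring

/-- Gagliardo–Nirenberg-type inequality on `ℝ²`:
`‖θ‖_{L^∞} ≤ 6^{1/3} ‖∇θ‖_{L^∞}^{1/3} ‖θ‖_{L²}^{1/3} ‖∇θ‖_{L²}^{1/3}`. -/
theorem linfty_interpolation (θ : EuclideanSpace ℝ (Fin 2) → ℝ)
    (hθ : ContDiff ℝ 1 θ)
    (hθ2 : MemLp θ 2 volume)
    (hgrad2 : MemLp (fun x => fderiv ℝ θ x) 2 volume)
    (hgradInf : MemLp (fun x => fderiv ℝ θ x) ⊤ volume) :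
    MemLp θ ⊤ volume ∧
      eLpNorm θ ⊤ volume ≤
        ENNReal.ofReal ((6 : ℝ) ^ ((1 : ℝ) / 3)) *
          (eLpNorm (fun x => fderiv ℝ θ x) ⊤ volume) ^ ((1 : ℝ) / 3) *
          (eLpNorm θ 2 volume) ^ ((1 : ℝ) / 3) *
          (eLpNorm (fun x => fderiv ℝ θ x) 2 volume) ^ ((1 : ℝ) / 3) := by
  set L := eLpNorm (fun x => fderiv ℝ θ x) ⊤ volume
  set B := eLpNorm θ 2 volume
  set C := eLpNorm (fun x => fderiv ℝ θ x) 2 volume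
  have hL (x : ℝ²) : ‖fderiv ℝ θ x‖ₑ ≤ L :=
    (hθ.continuous_fderiv one_ne_zero).enorm_le_eLpNorm_top x
  have hlip : LipschitzWith L.toNNReal θ :=
    lipschitzWith_of_nnnorm_fderiv_le (hθ.differentiable one_ne_zero) fun x ↦
      ENNReal.coe_le_coe.1 <| ENNReal.coe_toNNReal hgradInf.eLpNorm_ne_top ▸ hL x
  have hdecay : Tendsto θ (cobounded ℝ²) (𝓝 0) :=
    hlip.uniformContinuous.tendsto_cobounded_zero_of_memLp hθ2 two_ne_zero ENNReal.ofNat_ne_top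
  have hcube (x : ℝ²) : ‖θ x‖ₑ ^ (3 : ℝ) ≤ 6 * L * (B * C) := by
    rw [ENNReal.rpow_ofNat]
    refine (enorm_pow_three_le_of_enorm_fderiv_le hθ hdecay hL x).trans ?_
    gcongr
    exact lintegral_enorm_mul_le_eLpNorm_two_mul hθ2.1 hgrad2.1
  have hbound : eLpNorm θ ⊤ volume ≤ (6 * L * (B * C)) ^ (3 : ℝ)⁻¹ :=
    eLpNormEssSup_le_of_ae_enorm_bound <| ae_of_all _ fun x ↦
      (ENNReal.le_rpow_inv_iff (by norm_num)).2 (hcube x)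
  have hsplit : (6 * L * (B * C)) ^ (3 : ℝ)⁻¹ = ENNReal.ofReal ((6 : ℝ) ^ ((1 : ℝ) / 3)) *
      L ^ ((1 : ℝ) / 3) * B ^ ((1 : ℝ) / 3) * C ^ ((1 : ℝ) / 3) := by
    rw [← ENNReal.ofReal_rpow_of_nonneg (by norm_num) (by norm_num)]
    simp only [ENNReal.mul_rpow_of_nonneg _ _ (by norm_num : (0 : ℝ) ≤ 3⁻¹), one_div]
    norm_num [mul_assoc]
  have hfinite : 6 * L * (B * C) ≠ ⊤ :=
    ENNReal.mul_ne_top (ENNReal.mul_ne_top ENNReal.ofNat_ne_top hgradInf.eLpNorm_ne_top)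
      (ENNReal.mul_ne_top hθ2.eLpNorm_ne_top hgrad2.eLpNorm_ne_top)
  exact ⟨⟨hθ2.1, hbound.trans_lt (ENNReal.rpow_lt_top_of_nonneg (by norm_num) hfinite)⟩,
    hsplit ▸ hbound⟩
end
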